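/- arXiv:2309.16094 — 8 statements merged into one kernel-verified Lean document; each statement's English description precedes it below -/
import Mathlib

section
/- Let a, b ∈ ℂ with a + b = 1, and let y, z ∈ ℂ with |y| < 1 and |z| < 1. Then the infinite product over all pairs of positive integers (j,k) with j ≤ k and gcd(j,k) = 1 of (1/(1 − y^j z^k))^(1/(j^a k^b)) equals exp( Σ_{n=1}^∞ (Σ_{m=1}^n y^m / m^a) · z^n / n^b ). -/
/-!
Take logarithms. For `‖w‖ < 1` we have `(1 / (1 - w)) ^ s = exp (s · Σ_{r ≥ 1} w ^ r / r)`, and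
since `a + b = 1` the weights scale as `(r j) ^ a (r k) ^ b = r · j ^ a k ^ b`. Hence the logarithm of the
factor at a visible point `(j, k)` is `Σ_{r ≥ 1} y ^ (r j) z ^ (r k) / ((r j) ^ a (r k) ^ b)`. Every
lattice point `1 ≤ j ≤ k` is uniquely `r` times a visible one (`r = gcd j k`), so the logarithm of
the product is the sum of `y ^ j z ^ k / (j ^ a k ^ b)` over the whole triangle, and summing it
column by column (`k = n`) gives the right-hand side. All sums converge absolutely, which justifies
the regroupings.
-/

open Complex Asymptotics Filter

lemma summable_norm_pow_div_natCast_cpow (c : ℂ) {x : ℂ} (hx : ‖x‖ < 1) :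
    Summable fun n : ℕ => ‖x ^ n / (n : ℂ) ^ c‖ := by
  have hbound : (fun n : ℕ => (n : ℂ) ^ (-c)) =O[atTop] fun n => ((n ^ ⌈|c.re|⌉₊ : ℕ) : ℂ) := by
    refine IsBigO.of_bound 1 (eventually_atTop.2 ⟨1, fun n hn => ?_⟩)
    rw [one_mul, Nat.cast_pow, ← cpow_natCast]
    refine norm_natCast_cpow_le_norm_natCast_cpow_of_pos hn ?_
    simpa using (neg_le_abs c.re).trans (Nat.le_ceil _)
  simpa [div_eq_mul_inv, cpow_neg, mul_comm] using
    summable_norm_mul_geometric_of_norm_lt_one' hx hbound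

lemma norm_pow_mul_pow_lt_one {y z : ℂ} (hy : ‖y‖ < 1) (hz : ‖z‖ < 1) (j : ℕ) {k : ℕ}
    (hk : k ≠ 0) : ‖y ^ j * z ^ k‖ < 1 := by
  rw [norm_mul, norm_pow, norm_pow]
  exact mul_lt_one_of_nonneg_of_lt_one_right (pow_le_one₀ (norm_nonneg _) hy.le)
    (by positivity) (pow_lt_one₀ (norm_nonneg _) hz hk)

lemma hasSum_pnat_pow_div_neg_log {w : ℂ} (hw : ‖w‖ < 1) :
    HasSum (fun r : ℕ+ => w ^ (r : ℕ) / ((r : ℕ) : ℂ)) (-log (1 - w)) :=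
  hasSum_pnat_iff (f := fun n : ℕ => w ^ n / (n : ℂ)) |>.2 <| by
    rw [pow_zero, Nat.cast_zero, div_zero, add_zero]
    exact hasSum_taylorSeries_neg_log hw

lemma one_div_one_sub_cpow_eq_exp {w : ℂ} (hw : ‖w‖ < 1) (s : ℂ) :
    (1 / (1 - w)) ^ s = exp (-log (1 - w) * s) := by
  have hslit : 1 - w ∈ slitPlane := by
    simpa [sub_eq_add_neg] using mem_slitPlane_of_norm_lt_one (z := -w) (by simpa using hw)
  rw [one_div, cpow_def_of_ne_zero (inv_ne_zero (slitPlane_ne_zero hslit)),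
    log_inv _ (slitPlane_arg_ne_pi hslit)]

lemma natCast_mul_cpow_mul_natCast_mul_cpow {a b : ℂ} (hab : a + b = 1) {r : ℕ} (hr : r ≠ 0)
    (j k : ℕ) :
    ((r * j : ℕ) : ℂ) ^ a * ((r * k : ℕ) : ℂ) ^ b = r * ((j : ℂ) ^ a * (k : ℂ) ^ b) := by
  have hr' : (r : ℂ) ≠ 0 := Nat.cast_ne_zero.2 hr
  calc ((r * j : ℕ) : ℂ) ^ a * ((r * k : ℕ) : ℂ) ^ b
      = ((r : ℂ) ^ a * (r : ℂ) ^ b) * ((j : ℂ) ^ a * (k : ℂ) ^ b) := by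
        push_cast
        rw [natCast_mul_natCast_cpow, natCast_mul_natCast_cpow]
        ring
    _ = r * ((j : ℂ) ^ a * (k : ℂ) ^ b) := by rw [← cpow_add _ _ hr', hab, cpow_one]

abbrev LatticeTriangle := {p : ℕ × ℕ // 0 < p.1 ∧ 0 < p.2 ∧ p.1 ≤ p.2}

abbrev VisibleLatticeTriangle := {p : ℕ × ℕ // 0 < p.1 ∧ 0 < p.2 ∧ p.1 ≤ p.2 ∧ Nat.gcd p.1 p.2 = 1}

def visibleProdPNatEquiv : VisibleLatticeTriangle × ℕ+ ≃ LatticeTriangle where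
  toFun q := ⟨((q.2 : ℕ) * q.1.1.1, (q.2 : ℕ) * q.1.1.2),
    mul_pos q.2.pos q.1.2.1, mul_pos q.2.pos q.1.2.2.1, Nat.mul_le_mul_left _ q.1.2.2.2.1⟩
  invFun p :=
    have hg : 0 < Nat.gcd p.1.1 p.1.2 := Nat.gcd_pos_of_pos_left _ p.2.1
    (⟨(p.1.1 / Nat.gcd p.1.1 p.1.2, p.1.2 / Nat.gcd p.1.1 p.1.2),
      Nat.div_pos (Nat.gcd_le_left _ p.2.1) hg, Nat.div_pos (Nat.gcd_le_right _ p.2.2.1) hg,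
      Nat.div_le_div_right p.2.2.2, Nat.coprime_div_gcd_div_gcd hg⟩, ⟨_, hg⟩)
  left_inv := by
    rintro ⟨⟨⟨j, k⟩, -, -, -, hcop⟩, r⟩
    have hg : Nat.gcd ((r : ℕ) * j) ((r : ℕ) * k) = r := by rw [Nat.gcd_mul_left, hcop, mul_one]
    refine Prod.ext ?_ (PNat.eq hg)
    ext <;> simp [hg]
  right_inv := by
    rintro ⟨⟨j, k⟩, -⟩
    ext
    · exact Nat.mul_div_cancel' (Nat.gcd_dvd_left j k)
    · exact Nat.mul_div_cancel' (Nat.gcd_dvd_right j k)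

def latticeTriangleEquivSigma : LatticeTriangle ≃ Σ n : ℕ+, Finset.Icc 1 (n : ℕ) where
  toFun p := ⟨⟨p.1.2, p.2.2.1⟩, p.1.1, Finset.mem_Icc.2 ⟨p.2.1, p.2.2.2⟩⟩
  invFun q := ⟨(q.2, q.1), (Finset.mem_Icc.1 q.2.2).1, q.1.pos, (Finset.mem_Icc.1 q.2.2).2⟩
  left_inv _ := rfl
  right_inv _ := rfl

noncomputable def latticeTerm (a b y z : ℂ) (p : LatticeTriangle) : ℂ :=
  y ^ p.1.1 * z ^ p.1.2 / ((p.1.1 : ℂ) ^ a * (p.1.2 : ℂ) ^ b)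

lemma summable_latticeTerm (a b : ℂ) {y z : ℂ} (hy : ‖y‖ < 1) (hz : ‖z‖ < 1) :
    Summable (latticeTerm a b y z) := by
  have hprod : Summable fun p : ℕ × ℕ => y ^ p.1 / (p.1 : ℂ) ^ a * (z ^ p.2 / (p.2 : ℂ) ^ b) :=
    .of_norm <| .mul_norm (f := fun n : ℕ => y ^ n / (n : ℂ) ^ a)
      (g := fun n : ℕ => z ^ n / (n : ℂ) ^ b)
      (summable_norm_pow_div_natCast_cpow a hy) (summable_norm_pow_div_natCast_cpow b hz)
  refine (hprod.comp_injective Subtype.val_injective).congr fun p => ?_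
  exact div_mul_div_comm _ _ _ _

lemma tsum_latticeTerm (a b : ℂ) {y z : ℂ} (hy : ‖y‖ < 1) (hz : ‖z‖ < 1) :
    ∑' p, latticeTerm a b y z p = ∑' n : ℕ+,
      (∑ m ∈ Finset.Icc 1 (n : ℕ), y ^ m / (m : ℂ) ^ a) * z ^ (n : ℕ) / ((n : ℕ) : ℂ) ^ b := by
  have hsum : Summable fun q => latticeTerm a b y z (latticeTriangleEquivSigma.symm q) :=
    latticeTriangleEquivSigma.symm.summable_iff.2 (summable_latticeTerm a b hy hz)
  rw [← latticeTriangleEquivSigma.symm.tsum_eq, hsum.tsum_sigma]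
  refine tsum_congr fun n => (Finset.tsum_subtype (Finset.Icc 1 (n : ℕ))
    (fun m => y ^ m * z ^ (n : ℕ) / ((m : ℂ) ^ a * ((n : ℕ) : ℂ) ^ b))).trans ?_
  rw [Finset.sum_mul, Finset.sum_div]
  exact Finset.sum_congr rfl fun m _ => by ring

lemma hasSum_latticeTerm_visibleProdPNatEquiv {a b : ℂ} (hab : a + b = 1) {y z : ℂ}
    (hy : ‖y‖ < 1) (hz : ‖z‖ < 1) (p : VisibleLatticeTriangle) :
    HasSum (fun r : ℕ+ => latticeTerm a b y z (visibleProdPNatEquiv (p, r)))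
      (-log (1 - y ^ p.1.1 * z ^ p.1.2) * (1 / ((p.1.1 : ℂ) ^ a * (p.1.2 : ℂ) ^ b))) := by
  obtain ⟨⟨j, k⟩, hp⟩ := p
  have hterm (r : ℕ+) : latticeTerm a b y z (visibleProdPNatEquiv (⟨(j, k), hp⟩, r)) =
      (y ^ j * z ^ k) ^ (r : ℕ) / ((r : ℕ) : ℂ) * (1 / ((j : ℂ) ^ a * (k : ℂ) ^ b)) := by
    change y ^ ((r : ℕ) * j) * z ^ ((r : ℕ) * k) /
      ((((r : ℕ) * j : ℕ) : ℂ) ^ a * (((r : ℕ) * k : ℕ) : ℂ) ^ b) = _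
    rw [natCast_mul_cpow_mul_natCast_mul_cpow hab r.ne_zero]
    ring
  simpa only [hterm] using (hasSum_pnat_pow_div_neg_log
    (norm_pow_mul_pow_lt_one hy hz j hp.2.1.ne')).mul_right (1 / ((j : ℂ) ^ a * (k : ℂ) ^ b))

/-- The 2D first-quadrant triangle Visible Point Vector identity. -/
theorem stmt_0 (a b : ℂ) (hab : a + b = 1) (y z : ℂ) (hy : ‖y‖ < 1) (hz : ‖z‖ < 1) :
    (∏' p : {p : ℕ × ℕ // 0 < p.1 ∧ 0 < p.2 ∧ p.1 ≤ p.2 ∧ Nat.gcd p.1 p.2 = 1},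
      (1 / (1 - y ^ p.1.1 * z ^ p.1.2)) ^ (1 / ((p.1.1 : ℂ) ^ a * (p.1.2 : ℂ) ^ b))) =
    Complex.exp (∑' n : ℕ+,
      (∑ m ∈ Finset.Icc 1 (n : ℕ), y ^ m / (m : ℂ) ^ a) * z ^ (n : ℕ) / ((n : ℕ) : ℂ) ^ b) := by
  have hlog : HasSum (fun p : VisibleLatticeTriangle =>
      -log (1 - y ^ p.1.1 * z ^ p.1.2) * (1 / ((p.1.1 : ℂ) ^ a * (p.1.2 : ℂ) ^ b)))
      (∑' p, latticeTerm a b y z p) := by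
    rw [← visibleProdPNatEquiv.tsum_eq]
    exact (visibleProdPNatEquiv.summable_iff.2 (summable_latticeTerm a b hy hz)).hasSum
      |>.prod_fiberwise (hasSum_latticeTerm_visibleProdPNatEquiv hab hy hz)
  rw [← tsum_latticeTerm a b hy hz, ← hlog.cexp.tprod_eq]
  exact tprod_congr fun p =>
    one_div_one_sub_cpow_eq_exp (norm_pow_mul_pow_lt_one hy hz _ p.2.2.1.ne') _
end

section
/- Let y, z ∈ ℂ with |y| < 1, |z| < 1 and y ≠ 1. Then the infinite product over all pairs of positive integers (j,k) with j ≤ k and gcd(j,k) = 1 of (1/(1 − y^j z^k))^(1/k) equals ((1 − yz)/(1 − z))^(y/(1 − y)). -/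
/-!
Taking principal logarithms, the factor at a coprime pair `(j, k)` is `exp` of
`-(1/k) log (1 - y^j z^k) = ∑_{m ≥ 1} y^{jm} z^{km} / (km)`. Since every pair `1 ≤ J ≤ K` is
uniquely `(jm, km)` with `gcd j k = 1`, these series together rearrange into
`∑_{1 ≤ J ≤ K} y^J z^K / K = ∑_K (y + ⋯ + y^K) z^K / K`, and summing the geometric sums gives
`y/(1-y) · (log (1 - yz) - log (1 - z))`. All series converge absolutely for `|y|, |z| < 1`.
-/

open Complex Finset

namespace Complex

lemma re_one_sub_pos {w : ℂ} (hw : ‖w‖ < 1) : 0 < (1 - w).re := by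
  rw [sub_re, one_re, sub_pos]
  exact (re_le_norm w).trans_lt hw

lemma one_sub_mem_slitPlane {w : ℂ} (hw : ‖w‖ < 1) : 1 - w ∈ slitPlane :=
  mem_slitPlane_iff.2 (Or.inl (re_one_sub_pos hw))

lemma log_div_of_re_pos {a b : ℂ} (ha : 0 < a.re) (hb : 0 < b.re) :
    log (a / b) = log a - log b := by
  have ha' := abs_lt.1 (abs_arg_lt_pi_div_two_iff.2 (Or.inl ha))
  have hb' := abs_lt.1 (abs_arg_lt_pi_div_two_iff.2 (Or.inl hb))
  have ha0 : a ≠ 0 := fun h => by simp [h] at ha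
  have hb0 : b ≠ 0 := fun h => by simp [h] at hb
  rw [← exp_log ha0, ← exp_log hb0, ← exp_sub, log_exp] <;>
    simp only [sub_im, log_im, exp_log ha0, exp_log hb0] <;> linarith

lemma one_div_cpow_eq_exp {x : ℂ} (hx : x ∈ slitPlane) (s : ℂ) :
    (1 / x) ^ s = exp (s * -log x) := by
  rw [cpow_def_of_ne_zero (one_div_ne_zero (slitPlane_ne_zero hx)), one_div,
    log_inv _ (slitPlane_arg_ne_pi hx), mul_comm]

lemma hasSum_pow_div_mul_pnat {w : ℂ} (hw : ‖w‖ < 1) (k : ℕ) :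
    HasSum (fun m : ℕ+ => w ^ (m : ℕ) / (k * m)) (1 / k * -log (1 - w)) := by
  refine (hasSum_pnat_iff (f := fun m : ℕ => w ^ m / (k * m))).2 ?_
  have h := (hasSum_taylorSeries_neg_log hw).div_const (k : ℂ)
  simp only [div_div, mul_comm _ (k : ℂ)] at h
  rwa [Nat.cast_zero, mul_zero, div_zero, add_zero, one_div_mul_eq_div]

lemma norm_pow_mul_pow_lt_one {y z : ℂ} (hy : ‖y‖ < 1) (hz : ‖z‖ ≤ 1) {j : ℕ} (hj : j ≠ 0)
    (k : ℕ) : ‖y ^ j * z ^ k‖ < 1 := by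
  rw [norm_mul, norm_pow, norm_pow]
  calc ‖y‖ ^ j * ‖z‖ ^ k ≤ ‖y‖ ^ j :=
        mul_le_of_le_one_right (by positivity) (pow_le_one₀ (norm_nonneg z) hz)
    _ < 1 := pow_lt_one₀ (norm_nonneg y) hy hj

end Complex

lemma geom_sum_Icc_one {𝕜 : Type*} [Field 𝕜] {y : 𝕜} (hy : y ≠ 1) (n : ℕ) :
    ∑ i ∈ Icc 1 n, y ^ i = y * (1 - y ^ n) / (1 - y) := by
  rw [← Ico_add_one_right_eq_Icc, geom_sum_Ico hy (by omega : 1 ≤ n + 1), ← neg_div_neg_eq]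
  ring

def coprimePairMulEquiv :
    {p : ℕ × ℕ // 0 < p.1 ∧ 0 < p.2 ∧ p.1 ≤ p.2 ∧ Nat.gcd p.1 p.2 = 1} × ℕ+ ≃
      {q : ℕ × ℕ // 0 < q.1 ∧ q.1 ≤ q.2} where
  toFun x := ⟨(x.1.1.1 * x.2, x.1.1.2 * x.2), Nat.mul_pos x.1.2.1 x.2.pos,
    Nat.mul_le_mul_right _ x.1.2.2.2.1⟩
  invFun q :=
    ⟨⟨(q.1.1 / Nat.gcd q.1.1 q.1.2, q.1.2 / Nat.gcd q.1.1 q.1.2),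
      Nat.div_gcd_pos_of_pos_left _ q.2.1,
      Nat.div_gcd_pos_of_pos_right _ (q.2.1.trans_le q.2.2),
      Nat.div_le_div_right q.2.2,
      Nat.coprime_div_gcd_div_gcd (Nat.gcd_pos_of_pos_left _ q.2.1)⟩,
     ⟨Nat.gcd q.1.1 q.1.2, Nat.gcd_pos_of_pos_left _ q.2.1⟩⟩
  left_inv := by
    rintro ⟨⟨⟨j, k⟩, -, -, -, hcop⟩, m⟩
    have hgcd : Nat.gcd (j * m) (k * m) = m := by rw [Nat.gcd_mul_right, hcop, one_mul]
    refine Prod.ext (Subtype.ext ?_) (PNat.eq ?_) <;> simp [hgcd]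
  right_inv := by
    rintro ⟨⟨J, K⟩, -⟩
    ext <;> simp [Nat.div_mul_cancel, Nat.gcd_dvd_left, Nat.gcd_dvd_right]

noncomputable def pairTerm (y z : ℂ) (q : ℕ × ℕ) : ℂ := y ^ q.1 * z ^ q.2 / q.2

lemma pairTerm_mul (y z : ℂ) (j k m : ℕ) :
    pairTerm y z (j * m, k * m) = (y ^ j * z ^ k) ^ m / (k * m) := by
  simp only [pairTerm, mul_pow, pow_mul, Nat.cast_mul]

lemma hasSum_pairTerm_of_le {y z : ℂ} (hy : ‖y‖ < 1) (hz : ‖z‖ < 1) :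
    HasSum (fun q : {q : ℕ × ℕ // 0 < q.1 ∧ q.1 ≤ q.2} => pairTerm y z q)
      (y / (1 - y) * (log (1 - y * z) - log (1 - z))) := by
  set S : Set (ℕ × ℕ) := {q | 0 < q.1 ∧ q.1 ≤ q.2}
  set f : ℕ × ℕ → ℂ := S.indicator (pairTerm y z)
  have hy1 : y ≠ 1 := by rintro rfl; simp at hy
  have hf : Summable f := by
    refine Summable.of_norm_bounded ((summable_geometric_of_lt_one (norm_nonneg y) hy).mul_of_nonneg
      (summable_geometric_of_lt_one (norm_nonneg z) hz) (fun _ => by positivity)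
      (fun _ => by positivity)) fun q => ?_
    by_cases hq : q ∈ S
    · simp only [f, Set.indicator_of_mem hq, pairTerm, norm_div, norm_mul, norm_pow, norm_natCast]
      exact div_le_self (by positivity) (by exact_mod_cast hq.1.trans_le hq.2)
    · simp only [f, Set.indicator_of_notMem hq, norm_zero]
      positivity
  have hcol (K : ℕ) :
      HasSum (fun J => f (J, K)) (y / (1 - y) * (z ^ K / K - (y * z) ^ K / K)) := by
    have hsupp : ∀ J ∉ Icc 1 K, f (J, K) = 0 := fun J hJ =>
      Set.indicator_of_notMem (s := S) (fun hq => hJ (mem_Icc.2 hq)) _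
    have hval : ∑ J ∈ Icc 1 K, f (J, K) = y / (1 - y) * (z ^ K / K - (y * z) ^ K / K) := by
      rw [sum_congr rfl fun J hJ => Set.indicator_of_mem (s := S) (mem_Icc.1 hJ) _]
      simp only [pairTerm, mul_div_assoc, ← sum_mul, geom_sum_Icc_one hy1, mul_pow]
      ring
    exact hval ▸ hasSum_sum_of_ne_finset_zero hsupp
  have hrow : HasSum (fun K : ℕ => y / (1 - y) * (z ^ K / K - (y * z) ^ K / K))
      (y / (1 - y) * (log (1 - y * z) - log (1 - z))) := by
    have hyz : ‖y * z‖ < 1 := by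
      rw [norm_mul]; exact mul_lt_one_of_nonneg_of_lt_one_left (norm_nonneg y) hy hz.le
    rw [show log (1 - y * z) - log (1 - z) = -log (1 - z) - -log (1 - y * z) by ring]
    exact ((hasSum_taylorSeries_neg_log hz).sub (hasSum_taylorSeries_neg_log hyz)).mul_left _
  have hsum : ∑' q, f q = _ :=
    (((Equiv.prodComm ℕ ℕ).hasSum_iff.2 hf.hasSum).prod_fiberwise hcol).unique hrow
  exact (hasSum_subtype_iff_indicator (s := S)).2 (hsum ▸ hf.hasSum)

lemma hasSum_pairTerm_coprimePairMulEquiv {y z : ℂ} (hy : ‖y‖ < 1) (hz : ‖z‖ < 1)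
    (p : {p : ℕ × ℕ // 0 < p.1 ∧ 0 < p.2 ∧ p.1 ≤ p.2 ∧ Nat.gcd p.1 p.2 = 1}) :
    HasSum (fun m => pairTerm y z (coprimePairMulEquiv (p, m)))
      (1 / p.1.2 * -log (1 - y ^ p.1.1 * z ^ p.1.2)) := by
  simpa only [coprimePairMulEquiv, Equiv.coe_fn_mk, pairTerm_mul]
    using hasSum_pow_div_mul_pnat (norm_pow_mul_pow_lt_one hy hz.le p.2.1.ne' p.1.2) p.1.2

theorem stmt_1_general (y z : ℂ) (hy : ‖y‖ < 1) (hz : ‖z‖ < 1) :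
    (∏' p : {p : ℕ × ℕ // 0 < p.1 ∧ 0 < p.2 ∧ p.1 ≤ p.2 ∧ Nat.gcd p.1 p.2 = 1},
      (1 / (1 - y ^ p.1.1 * z ^ p.1.2)) ^ (1 / (p.1.2 : ℂ))) =
    ((1 - y * z) / (1 - z)) ^ (y / (1 - y)) := by
  have hlog := (coprimePairMulEquiv.hasSum_iff.2 (hasSum_pairTerm_of_le hy hz)).cexp
  have hprod := hlog.prod_fiberwise fun p => (hasSum_pairTerm_coprimePairMulEquiv hy hz p).cexp
  have hyz : ‖y * z‖ < 1 := by
    rw [norm_mul]; exact mul_lt_one_of_nonneg_of_lt_one_left (norm_nonneg y) hy hz.le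
  have hfactor (p : {p : ℕ × ℕ // 0 < p.1 ∧ 0 < p.2 ∧ p.1 ≤ p.2 ∧ Nat.gcd p.1 p.2 = 1}) :
      (1 / (1 - y ^ p.1.1 * z ^ p.1.2)) ^ (1 / (p.1.2 : ℂ)) =
        exp (1 / p.1.2 * -log (1 - y ^ p.1.1 * z ^ p.1.2)) :=
    one_div_cpow_eq_exp (one_sub_mem_slitPlane (norm_pow_mul_pow_lt_one hy hz.le p.2.1.ne' _)) _
  have hyz0 := slitPlane_ne_zero (one_sub_mem_slitPlane hyz)
  have hz0 := slitPlane_ne_zero (one_sub_mem_slitPlane hz)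
  rw [tprod_congr hfactor, hprod.tprod_eq, cpow_def_of_ne_zero (div_ne_zero hyz0 hz0),
    log_div_of_re_pos (re_one_sub_pos hyz) (re_one_sub_pos hz), mul_comm]

theorem stmt_1 (y z : ℂ) (hy : ‖y‖ < 1) (hz : ‖z‖ < 1) (hy1 : y ≠ 1) :
    (∏' p : {p : ℕ × ℕ // 0 < p.1 ∧ 0 < p.2 ∧ p.1 ≤ p.2 ∧ Nat.gcd p.1 p.2 = 1},
      (1 / (1 - y ^ p.1.1 * z ^ p.1.2)) ^ (1 / (p.1.2 : ℂ))) =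
    ((1 - y * z) / (1 - z)) ^ (y / (1 - y)) :=
  stmt_1_general y z hy hz
end

section
/- Let y, z ∈ ℂ with |y| < 1, |z| < 1 and y ≠ 1. Then the infinite product over all pairs of positive integers (j,k) with j ≤ k and gcd(j,k) = 1 of (1 − y^j z^k)^(1/k) equals ((1 − z)/(1 − yz))^(y/(1 − y)). -/
/-!
Taking logarithms, `log (1 - w) / k = -∑_{n ≥ 1} w ^ n / (k n)`. Since every pair `0 < a ≤ b` is
uniquely `(n j, n k)` with `(j, k)` coprime and `n = gcd a b`, the logarithm of the product is the
double series `-∑_{0 < a ≤ b} y ^ a z ^ b / b`. Summing over `a` first gives the geometric sum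
`y (1 - y ^ b) / (1 - y)`, so the series equals `y / (1 - y) · ∑_b ((y z) ^ b - z ^ b) / b`, that is
`y / (1 - y) · (log (1 - z) - log (1 - y z))`. Both logarithms have arguments in `(-π/2, π/2)`, so
their difference is the principal logarithm of `(1 - z) / (1 - y z)`.
-/

open Complex

abbrev LePairs := {q : ℕ × ℕ // 0 < q.1 ∧ q.1 ≤ q.2}

abbrev CoprimeLePairs := {p : ℕ × ℕ // 0 < p.1 ∧ 0 < p.2 ∧ p.1 ≤ p.2 ∧ Nat.gcd p.1 p.2 = 1}

def coprimeLePairsProdPNatEquiv : CoprimeLePairs × ℕ+ ≃ LePairs where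
  toFun pn := ⟨(pn.1.1.1 * pn.2, pn.1.1.2 * pn.2),
    mul_pos pn.1.2.1 pn.2.pos, Nat.mul_le_mul_right _ pn.1.2.2.2.1⟩
  invFun q :=
    (⟨(q.1.1 / Nat.gcd q.1.1 q.1.2, q.1.2 / Nat.gcd q.1.1 q.1.2),
       Nat.div_gcd_pos_of_pos_left _ q.2.1,
       Nat.div_gcd_pos_of_pos_right _ (q.2.1.trans_le q.2.2),
       Nat.div_le_div_right q.2.2,
       Nat.coprime_div_gcd_div_gcd (Nat.gcd_pos_of_pos_left _ q.2.1)⟩,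
     ⟨Nat.gcd q.1.1 q.1.2, Nat.gcd_pos_of_pos_left _ q.2.1⟩)
  left_inv := by
    rintro ⟨⟨⟨j, k⟩, -, -, -, hjk⟩, n⟩
    have hgcd : Nat.gcd (j * n) (k * n) = n := by rw [Nat.gcd_mul_right, hjk, one_mul]
    refine Prod.ext (Subtype.ext (Prod.ext ?_ ?_)) (PNat.eq ?_) <;> simp [hgcd]
  right_inv := by
    rintro ⟨⟨a, b⟩, -⟩
    ext
    · exact Nat.div_mul_cancel (Nat.gcd_dvd_left a b)
    · exact Nat.div_mul_cancel (Nat.gcd_dvd_right a b)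

lemma norm_pow_mul_pow_lt_one_s2 {R : Type*} [NormedDivisionRing R] {y z : R} (hy : ‖y‖ ≤ 1)
    (hz : ‖z‖ < 1) (a : ℕ) {b : ℕ} (hb : b ≠ 0) : ‖y ^ a * z ^ b‖ < 1 := by
  rw [norm_mul, norm_pow, norm_pow]
  exact mul_lt_one_of_nonneg_of_lt_one_right (pow_le_one₀ (norm_nonneg _) hy)
    (by positivity) (pow_lt_one₀ (norm_nonneg _) hz hb)

lemma Complex.log_div_of_re_pos_s2 {u v : ℂ} (hu : 0 < u.re) (hv : 0 < v.re) :
    log (u / v) = log u - log v := by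
  have hu' := abs_lt.mp (abs_arg_lt_pi_div_two_iff.mpr (Or.inl hu))
  have hv' := abs_lt.mp (abs_arg_lt_pi_div_two_iff.mpr (Or.inl hv))
  have him : (log u - log v).im = arg u - arg v := by simp [log_im]
  conv_lhs => rw [← exp_log (ne_zero_of_re_pos hu), ← exp_log (ne_zero_of_re_pos hv), ← exp_sub]
  exact log_exp (by rw [him]; linarith) (by rw [him]; linarith [Real.pi_pos])

lemma Complex.re_one_sub_pos_s2 {w : ℂ} (hw : ‖w‖ < 1) : 0 < (1 - w).re := by
  rw [sub_re, one_re, sub_pos]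
  exact (re_le_norm w).trans_lt hw

lemma hasSum_neg_pow_div_mul_pnat {w : ℂ} (hw : ‖w‖ < 1) (k : ℕ) :
    HasSum (fun n : ℕ+ => -(w ^ (n : ℕ)) / (k * n)) (log (1 - w) / k) := by
  refine (hasSum_pnat_iff (f := fun n : ℕ => -(w ^ n) / (k * n))).mpr ?_
  convert ((hasSum_taylorSeries_neg_log hw).div_const (k : ℂ)).neg using 1
  · ext n
    ring
  · simp [neg_div]

lemma sum_Icc_neg_pow_mul_pow_div {K : Type*} [Field K] {y : K} (hy : y ≠ 1) (z : K) (b : ℕ) :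
    ∑ a ∈ Finset.Icc 1 b, -(y ^ a * z ^ b) / b = y / (1 - y) * ((y * z) ^ b / b - z ^ b / b) := by
  have hgeom : ∑ a ∈ Finset.Icc 1 b, y ^ a = (y ^ (b + 1) - y ^ 1) / (y - 1) :=
    geom_sum_Ico hy (by omega)
  calc ∑ a ∈ Finset.Icc 1 b, -(y ^ a * z ^ b) / b
      = -(z ^ b) / b * ∑ a ∈ Finset.Icc 1 b, y ^ a := by
        rw [Finset.mul_sum]
        exact Finset.sum_congr rfl fun a _ => by ring
    _ = y / (1 - y) * ((y * z) ^ b / b - z ^ b / b) := by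
        rw [hgeom]
        field_simp
        ring

theorem hasSum_lePairs {y z : ℂ} (hy : ‖y‖ < 1) (hz : ‖z‖ < 1) :
    HasSum (fun q : LePairs => -(y ^ q.1.1 * z ^ q.1.2) / q.1.2)
      ((log (1 - z) - log (1 - y * z)) * (y / (1 - y))) := by
  set s : Set (ℕ × ℕ) := {q | 0 < q.1 ∧ q.1 ≤ q.2}
  set F := s.indicator fun q : ℕ × ℕ => -(y ^ q.1 * z ^ q.2) / q.2
  have hF : Summable F := by
    refine .of_norm_bounded ((summable_norm_geometric_of_norm_lt_one hy).mul_norm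
      (summable_norm_geometric_of_norm_lt_one hz)) fun q => ?_
    dsimp only [F]
    by_cases hq : q ∈ s
    · rw [Set.indicator_of_mem hq, norm_div, norm_neg, norm_natCast]
      exact div_le_self (norm_nonneg _) (by exact_mod_cast hq.1.trans_le hq.2)
    · rw [Set.indicator_of_notMem hq, norm_zero]
      positivity
  have hfiber (b : ℕ) :
      HasSum (fun a => F (a, b)) (y / (1 - y) * ((y * z) ^ b / b - z ^ b / b)) := by
    dsimp only [F]
    have hy1 : y ≠ 1 := by
      rintro rfl
      simp at hy
    rw [← sum_Icc_neg_pow_mul_pow_div hy1 z b]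
    convert hasSum_sum_of_ne_finset_zero (L := .unconditional ℕ) (s := Finset.Icc 1 b)
      fun a ha => ?_ using 1
    · exact Finset.sum_congr rfl fun a ha => by
        rw [Set.indicator_of_mem (show (a, b) ∈ s from Finset.mem_Icc.mp ha)]
    · exact Set.indicator_of_notMem (show (a, b) ∉ s from fun h => ha (Finset.mem_Icc.mpr h)) _
  have hyz : ‖y * z‖ < 1 := by simpa using norm_pow_mul_pow_lt_one_s2 hy.le hz 1 one_ne_zero
  have hcol : HasSum (fun b : ℕ => y / (1 - y) * ((y * z) ^ b / b - z ^ b / b))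
      ((log (1 - z) - log (1 - y * z)) * (y / (1 - y))) := by
    rw [show (log (1 - z) - log (1 - y * z)) * (y / (1 - y))
        = y / (1 - y) * (-log (1 - y * z) - -log (1 - z)) by ring]
    exact ((hasSum_taylorSeries_neg_log hyz).sub (hasSum_taylorSeries_neg_log hz)).mul_left _
  have hswap := (Equiv.prodComm ℕ ℕ).hasSum_iff.mpr hF.hasSum
  rw [← (hswap.prod_fiberwise hfiber).unique hcol]
  exact hasSum_subtype_iff_indicator.mpr hF.hasSum

theorem hasSum_coprimeLePairs_log {y z : ℂ} (hy : ‖y‖ < 1) (hz : ‖z‖ < 1) :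
    HasSum (fun p : CoprimeLePairs => log (1 - y ^ p.1.1 * z ^ p.1.2) / p.1.2)
      ((log (1 - z) - log (1 - y * z)) * (y / (1 - y))) := by
  refine (coprimeLePairsProdPNatEquiv.hasSum_iff.mpr (hasSum_lePairs hy hz)).prod_fiberwise
    fun p => ?_
  convert hasSum_neg_pow_div_mul_pnat (norm_pow_mul_pow_lt_one_s2 hy.le hz _ p.2.2.1.ne') p.1.2
    using 1
  ext n
  simp only [Function.comp_apply, coprimeLePairsProdPNatEquiv, Equiv.coe_fn_mk, Nat.cast_mul,
    pow_mul, mul_pow]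

theorem stmt_2_general (y z : ℂ) (hy : ‖y‖ < 1) (hz : ‖z‖ < 1) :
    (∏' p : {p : ℕ × ℕ // 0 < p.1 ∧ 0 < p.2 ∧ p.1 ≤ p.2 ∧ Nat.gcd p.1 p.2 = 1},
      (1 - y ^ p.1.1 * z ^ p.1.2) ^ (1 / (p.1.2 : ℂ))) =
    ((1 - z) / (1 - y * z)) ^ (y / (1 - y)) := by
  have hyz : ‖y * z‖ < 1 := by simpa using norm_pow_mul_pow_lt_one_s2 hy.le hz 1 one_ne_zero
  have hq : (1 - z) / (1 - y * z) ≠ 0 :=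
    div_ne_zero (ne_zero_of_re_pos (re_one_sub_pos_s2 hz)) (ne_zero_of_re_pos (re_one_sub_pos_s2 hyz))
  rw [cpow_def_of_ne_zero hq, log_div_of_re_pos_s2 (re_one_sub_pos_s2 hz) (re_one_sub_pos_s2 hyz),
    ← (hasSum_coprimeLePairs_log hy hz).cexp.tprod_eq]
  refine tprod_congr fun p => ?_
  rw [cpow_def_of_ne_zero, Function.comp_apply, mul_one_div]
  exact ne_zero_of_re_pos (re_one_sub_pos_s2 (norm_pow_mul_pow_lt_one_s2 hy.le hz _ p.2.2.1.ne'))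

theorem stmt_2 (y z : ℂ) (hy : ‖y‖ < 1) (hz : ‖z‖ < 1) (hy1 : y ≠ 1) :
    (∏' p : {p : ℕ × ℕ // 0 < p.1 ∧ 0 < p.2 ∧ p.1 ≤ p.2 ∧ Nat.gcd p.1 p.2 = 1},
      (1 - y ^ p.1.1 * z ^ p.1.2) ^ (1 / (p.1.2 : ℂ))) =
    ((1 - z) / (1 - y * z)) ^ (y / (1 - y)) :=
  stmt_2_general y z hy hz
end

section
/- Let z ∈ ℂ with |z| < 1. Then the infinite product over all positive integers k of (1 − z^k)^(φ(k)/k) equals exp(z/(z − 1)), where φ is Euler's totient function. -/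
/-!
Taking logarithms, `∑ₖ φ(k)/k · log (1 - zᵏ) = -∑ₖ ∑ₙ φ(k) z^(kn) / (kn)`. The double series
converges absolutely for `‖z‖ < 1`; grouping it by `m = kn` and using `∑_{d ∣ m} φ(d) = m` leaves
`-∑_{m ≥ 1} zᵐ = z / (z - 1)`.
-/

open Complex

lemma norm_pow_lt_one {R : Type*} [SeminormedRing R] {z : R} (hz : ‖z‖ < 1) {k : ℕ}
    (hk : k ≠ 0) : ‖z ^ k‖ < 1 :=
  (norm_pow_le' z (Nat.pos_of_ne_zero hk)).trans_lt (pow_lt_one₀ (norm_nonneg z) hz hk)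

lemma pow_mul_le_sqrt_pow_mul_sqrt_pow {r : ℝ} (hr0 : 0 ≤ r) (hr1 : r ≤ 1) {k n : ℕ}
    (hk : k ≠ 0) (hn : n ≠ 0) : r ^ (k * n) ≤ √r ^ k * √r ^ n := by
  have hs0 : 0 ≤ √r := Real.sqrt_nonneg r
  have hs1 : √r ≤ 1 := Real.sqrt_le_one.mpr hr1
  calc r ^ (k * n) = √r ^ (k * n) * √r ^ (k * n) := by rw [← mul_pow, Real.mul_self_sqrt hr0]
    _ ≤ √r ^ k * √r ^ n :=
      mul_le_mul (pow_le_pow_of_le_one hs0 hs1 (Nat.le_mul_of_pos_right k (by omega)))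
        (pow_le_pow_of_le_one hs0 hs1 (Nat.le_mul_of_pos_left n (by omega)))
        (by positivity) (by positivity)

lemma summable_div_mul_pow_mul_div {a : ℕ → ℂ} {C : ℝ} (ha : ∀ k, ‖a k / k‖ ≤ C) {z : ℂ}
    (hz : ‖z‖ < 1) : Summable fun p : ℕ × ℕ ↦ a p.1 / p.1 * (z ^ (p.1 * p.2) / p.2) := by
  have hC : 0 ≤ C := by simpa using ha 0
  have hs : 0 ≤ √‖z‖ ∧ √‖z‖ < 1 :=
    ⟨Real.sqrt_nonneg _, (Real.sqrt_lt' one_pos).mpr (by simpa using hz)⟩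
  have hgeom := summable_geometric_of_lt_one hs.1 hs.2
  have hmaj : Summable fun p : ℕ × ℕ ↦ C * (√‖z‖ ^ p.1 * √‖z‖ ^ p.2) :=
    (hgeom.mul_of_nonneg hgeom (fun _ ↦ by positivity) fun _ ↦ by positivity).mul_left C
  refine .of_norm (hmaj.of_nonneg_of_le (fun _ ↦ norm_nonneg _) fun ⟨k, n⟩ ↦ ?_)
  rcases eq_or_ne k 0 with rfl | hk
  · simp only [CharP.cast_eq_zero, div_zero, zero_mul, norm_zero]; positivity
  rcases eq_or_ne n 0 with rfl | hn
  · simp only [CharP.cast_eq_zero, div_zero, mul_zero, norm_zero]; positivity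
  dsimp only
  rw [norm_mul, norm_div (z ^ _), norm_pow, norm_natCast]
  gcongr
  · exact ha k
  calc ‖z‖ ^ (k * n) / n ≤ ‖z‖ ^ (k * n) :=
        div_le_self (by positivity) (by exact_mod_cast Nat.one_le_iff_ne_zero.mpr hn)
    _ ≤ √‖z‖ ^ k * √‖z‖ ^ n := pow_mul_le_sqrt_pow_mul_sqrt_pow (norm_nonneg z) hz.le hk hn

lemma tsum_preimage_mul_eq_sum_divisorsAntidiagonal {M : Type*} [AddCommMonoid M]
    [TopologicalSpace M] {f : ℕ × ℕ → M} (hf : ∀ p : ℕ × ℕ, p.1 * p.2 = 0 → f p = 0) (m : ℕ) :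
    ∑' p : (fun p : ℕ × ℕ ↦ p.1 * p.2) ⁻¹' {m}, f p = ∑ p ∈ m.divisorsAntidiagonal, f p := by
  rcases eq_or_ne m 0 with rfl | hm
  · rw [Nat.divisorsAntidiagonal_zero, Finset.sum_empty]
    refine (tsum_congr fun p ↦ ?_).trans tsum_zero
    exact hf p p.2
  · have hfiber : (fun p : ℕ × ℕ ↦ p.1 * p.2) ⁻¹' {m} = m.divisorsAntidiagonal := by
      ext p; simp [Nat.mem_divisorsAntidiagonal, hm]
    rw [hfiber, Finset.tsum_subtype']

/-- Indexing by all of `ℕ` is harmless: with `x / 0 = 0` the terms with `k = 0` or `n = 0`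
of the double series vanish, as does the `m = 0` term on the right. -/
theorem hasSum_div_mul_neg_log_one_sub_pow {a : ℕ → ℂ} {C : ℝ} (ha : ∀ k, ‖a k / k‖ ≤ C)
    {z : ℂ} (hz : ‖z‖ < 1) {s : ℂ}
    (hs : HasSum (fun m : ℕ ↦ (∑ d ∈ m.divisors, a d) / m * z ^ m) s) :
    HasSum (fun k : ℕ ↦ a k / k * -log (1 - z ^ k)) s := by
  set f : ℕ × ℕ → ℂ := fun p ↦ a p.1 / p.1 * (z ^ (p.1 * p.2) / p.2)
  have hf : Summable f := summable_div_mul_pow_mul_div ha hz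
  have hf_zero (p : ℕ × ℕ) (hp : p.1 * p.2 = 0) : f p = 0 := by
    rcases Nat.mul_eq_zero.mp hp with h | h <;> simp [f, h]
  have hfiber (m : ℕ) : ∑' p : (fun p : ℕ × ℕ ↦ p.1 * p.2) ⁻¹' {m}, f p
      = (∑ d ∈ m.divisors, a d) / m * z ^ m := by
    rw [tsum_preimage_mul_eq_sum_divisorsAntidiagonal hf_zero]
    rcases eq_or_ne m 0 with rfl | hm
    · simp
    calc ∑ p ∈ m.divisorsAntidiagonal, f p
        = ∑ p ∈ m.divisorsAntidiagonal, a p.1 / m * z ^ m := by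
          refine Finset.sum_congr rfl fun p hp ↦ ?_
          obtain ⟨hpm, -⟩ := Nat.mem_divisorsAntidiagonal.mp hp
          obtain ⟨hp1, hp2⟩ := mul_ne_zero_iff.mp (hpm ▸ hm)
          simp only [f, ← hpm, Nat.cast_mul]
          field_simp
      _ = (∑ d ∈ m.divisors, a d) / m * z ^ m := by
          rw [Nat.sum_divisorsAntidiagonal (fun k _ ↦ a k / m * z ^ m), ← Finset.sum_mul,
            Finset.sum_div]
  have htotal : HasSum f s := by
    have := hf.hasSum.tsum_fiberwise (fun p ↦ p.1 * p.2)
    rw [funext hfiber] at this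
    exact this.unique hs ▸ hf.hasSum
  refine htotal.prod_fiberwise fun k ↦ ?_
  rcases eq_or_ne k 0 with rfl | hk
  · simp [f]
  simp_rw [f, pow_mul]
  exact (hasSum_taylorSeries_neg_log (norm_pow_lt_one hz hk)).mul_left _

-- `m / m` is `1` except for the junk value `0 / 0 = 0`, which removes the `m = 0` term.
lemma hasSum_natCast_div_mul_pow {z : ℂ} (hz : ‖z‖ < 1) :
    HasSum (fun m : ℕ ↦ (m : ℂ) / m * z ^ m) (z / (1 - z)) := by
  have h := (hasSum_geometric_of_norm_lt_one hz).mul_left z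
  rw [← div_eq_mul_inv] at h
  have hshift := (hasSum_nat_add_iff (f := fun m : ℕ ↦ (m : ℂ) / m * z ^ m) 1).mp <|
    h.congr_fun fun n ↦ by
      rw [div_self (Nat.cast_ne_zero.mpr n.succ_ne_zero), one_mul, pow_succ']
  simpa using hshift

open Nat in
theorem hasSum_totient_div_mul_log_one_sub_pow {z : ℂ} (hz : ‖z‖ < 1) :
    HasSum (fun k : ℕ ↦ (φ k : ℂ) / k * log (1 - z ^ k)) (z / (z - 1)) := by
  have htotient_div_le (k : ℕ) : ‖(φ k : ℂ) / k‖ ≤ 1 := by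
    rw [norm_div, norm_natCast, norm_natCast]
    exact div_le_one_of_le₀ (by exact_mod_cast totient_le k) (Nat.cast_nonneg _)
  have hsum_divisors :
      HasSum (fun m : ℕ ↦ (∑ d ∈ m.divisors, (φ d : ℂ)) / m * z ^ m) (z / (1 - z)) := by
    simpa only [← Nat.cast_sum, sum_totient] using hasSum_natCast_div_mul_pow hz
  have h := (hasSum_div_mul_neg_log_one_sub_pow htotient_div_le hz hsum_divisors).neg
  rw [← div_neg, neg_sub] at h
  simpa only [mul_neg, neg_neg] using h

theorem stmt_5 (z : ℂ) (hz : ‖z‖ < 1) :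
    (∏' k : ℕ+, (1 - z ^ (k : ℕ)) ^ ((Nat.totient (k : ℕ) : ℂ) / ((k : ℕ) : ℂ))) =
    Complex.exp (z / (z - 1)) := by
  have hsum : HasSum (fun k : ℕ+ ↦ (Nat.totient k : ℂ) / (k : ℕ) * log (1 - z ^ (k : ℕ)))
      (z / (z - 1)) := by
    refine (hasSum_pnat_iff
      (f := fun k : ℕ ↦ (Nat.totient k : ℂ) / k * log (1 - z ^ k))).mpr ?_
    simpa using hasSum_totient_div_mul_log_one_sub_pow hz
  refine HasProd.tprod_eq ?_
  convert hsum.cexp with k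
  have hk : (1 : ℂ) - z ^ (k : ℕ) ≠ 0 := sub_ne_zero.mpr fun h ↦ by
    simpa [← h] using norm_pow_lt_one hz k.ne_zero
  rw [Function.comp_apply, cpow_def_of_ne_zero hk, mul_comm]
end

section
/- Define f : ℂ → ℂ by f(z) = exp(z/(z − 1)) (so f is analytic on the open unit disc), and let α(n) denote the n-th iterated derivative of f at 0. Then α(0) = 1, α(1) = −1, and for every integer n ≥ 2 the recurrence α(n) + (n − 1)(n − 2)·α(n − 2) = (2n − 3)·α(n − 1) holds. -/
/-! Differentiating `w / (w - 1)` shows that `f z = exp (z / (z - 1))` solves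
`(z - 1) ((z - 1) f'(z)) = -f(z)` near `0`. Taking `n - 1` derivatives of this identity with the
Leibniz rule (only two terms survive for each linear factor `z - 1`) and evaluating at `0`
gives the recurrence. -/

open Complex Filter Topology

section LinearFactor

variable {𝕜 F : Type*} [NontriviallyNormedField 𝕜] [NormedAddCommGroup F] [NormedSpace 𝕜 F]

theorem iteratedDeriv_succ_sub_const_smul {g : 𝕜 → F} {x : 𝕜} (c : 𝕜) {n : ℕ}
    (hg : ContDiffAt 𝕜 (n + 1) g x) :
    iteratedDeriv (n + 1) (fun z => (z - c) • g z) x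
      = (x - c) • iteratedDeriv (n + 1) g x + (n + 1 : 𝕜) • iteratedDeriv n g x := by
  have hlin : ∀ i, iteratedDeriv (i + 1) (fun z : 𝕜 => z - c) = iteratedDeriv i (fun _ => 1) := by
    intro i
    rw [iteratedDeriv_succ']
    simp
  have leibniz := iteratedDerivWithin_smul (Set.mem_univ x) uniqueDiffOn_univ
    (f := fun z => z - c) (by fun_prop) (contDiffWithinAt_univ.mpr hg)
  simp only [iteratedDerivWithin_univ] at leibniz
  rw [show (fun z => (z - c) • g z) = (fun z => z - c) • g from rfl, leibniz,
    Finset.sum_range_succ', Finset.sum_range_succ', Finset.sum_eq_zero fun i _ => by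
      simp [hlin, iteratedDeriv_const]]
  simp [hlin, ← Nat.cast_smul_eq_nsmul 𝕜, add_comm]

theorem iteratedDeriv_sub_const_smul_deriv {g : 𝕜 → F} {x : 𝕜} (c : 𝕜) {n : ℕ}
    (hg : ContDiffAt 𝕜 (n + 1) g x) :
    iteratedDeriv n (fun z => (z - c) • deriv g z) x
      = (x - c) • iteratedDeriv (n + 1) g x + (n : 𝕜) • iteratedDeriv n g x := by
  cases n with
  | zero => simp
  | succ m =>
    rw [iteratedDeriv_succ_sub_const_smul c (hg.derivWithin le_rfl)]
    simp only [iteratedDeriv_succ', Nat.cast_succ]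

end LinearFactor

theorem hasDerivAt_cexp_div_sub_one {z : ℂ} (hz : z ≠ 1) :
    HasDerivAt (fun w => cexp (w / (w - 1))) (-cexp (z / (z - 1)) / (z - 1) ^ 2) z := by
  have hz' : z - 1 ≠ 0 := sub_ne_zero.mpr hz
  exact ((hasDerivAt_id' z).fun_div ((hasDerivAt_id' z).sub_const 1) hz').cexp.congr_deriv
    (by ring)

theorem contDiffAt_cexp_div_sub_one {z : ℂ} (hz : z ≠ 1) {n : WithTop ℕ∞} :
    ContDiffAt ℂ n (fun w => cexp (w / (w - 1))) z := by
  have hz' : z - 1 ≠ 0 := sub_ne_zero.mpr hz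
  fun_prop (disch := assumption)

theorem stmt_7 (α : ℕ → ℂ)
    (hα : ∀ n, α n = iteratedDeriv n (fun z : ℂ => Complex.exp (z / (z - 1))) 0) :
    α 0 = 1 ∧ α 1 = -1 ∧ ∀ n : ℕ, 2 ≤ n →
      α n + ((n : ℂ) - 1) * ((n : ℂ) - 2) * α (n - 2) = (2 * (n : ℂ) - 3) * α (n - 1) := by
  have ode : (fun z => (z - 1) • ((z - 1) • deriv (fun w => cexp (w / (w - 1))) z))
      =ᶠ[𝓝 0] fun z => -cexp (z / (z - 1)) := by
    filter_upwards [isOpen_ne.mem_nhds zero_ne_one] with z hz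
    rw [(hasDerivAt_cexp_div_sub_one hz).deriv, smul_eq_mul, smul_eq_mul]
    field_simp [sub_ne_zero.mpr hz]
  refine ⟨by simp [hα], by simp [hα, (hasDerivAt_cexp_div_sub_one zero_ne_one).deriv], ?_⟩
  intro n hn
  obtain ⟨k, rfl⟩ := Nat.exists_eq_add_of_le' hn
  have hf {n : WithTop ℕ∞} : ContDiffAt ℂ n (fun w => cexp (w / (w - 1))) 0 :=
    contDiffAt_cexp_div_sub_one zero_ne_one
  have ode_succ := ode.iteratedDeriv_eq (k + 1)
  rw [iteratedDeriv_succ_sub_const_smul 1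
      ((contDiffAt_fun_id.sub contDiffAt_const).fun_smul (hf.derivWithin le_rfl)),
    iteratedDeriv_sub_const_smul_deriv 1 hf, iteratedDeriv_sub_const_smul_deriv 1 hf,
    iteratedDeriv_fun_neg] at ode_succ
  simp only [hα, smul_eq_mul, Nat.add_sub_cancel, Nat.reduceSubDiff, Nat.cast_add] at ode_succ ⊢
  linear_combination ode_succ
end

section
/- Fix y ∈ ℂ with |y| < 1, and define g(z) = ((1 − yz)/(1 − z))^(1/(1 − y)) for |z| < 1, using the principal-branch complex power; g is analytic near 0. Let c(n) = g^(n)(0)/n! be its Taylor coefficients at 0. Then c(0) = 1, c(1) = 1, and for every integer n ≥ 0 one has n·y·c(n) + (n + 2)·c(n + 2) = (2 + n + y + n·y)·c(n + 1). -/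
/-!
Differentiating the quotient `w = (1 - yz)/(1 - z)` gives `w' = (1 - y) w / ((1 - z)(1 - yz))`, and
the exponent `1/(1 - y)` cancels the factor `1 - y`: the function `g = w ^ (1/(1 - y))` solves
`(1 - z)(1 - yz) g' = g` near `0`. Differentiating this equation `n + 1` times at `0` by Leibniz'
rule, where `z d/dz` multiplies the `n`-th derivative at `0` by `n`, gives the recurrence.
-/

open Complex Filter Topology

section IteratedDerivAtZero

variable {𝕜 : Type*} [NontriviallyNormedField 𝕜] {f : 𝕜 → 𝕜}

theorem iteratedDeriv_succ_id_mul_zero {m : ℕ} (hf : ContDiffAt 𝕜 (m + 1) f 0) :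
    iteratedDeriv (m + 1) (fun z => z * f z) 0 = (m + 1) * iteratedDeriv m f 0 := by
  rw [iteratedDeriv_fun_mul (f := fun z => z) contDiffAt_id (by exact_mod_cast hf),
    Finset.sum_eq_single 1]
  · simp [iteratedDeriv_fun_id_zero]
  · intro i _ hi
    simp [iteratedDeriv_fun_id_zero, hi]
  · simp

theorem iteratedDeriv_id_mul_deriv_zero {n : ℕ} (hf : ContDiffAt 𝕜 n (deriv f) 0) :
    iteratedDeriv n (fun z => z * deriv f z) 0 = n * iteratedDeriv n f 0 := by
  cases n with
  | zero => simp
  | succ m =>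
    rw [iteratedDeriv_succ_id_mul_zero hf, ← iteratedDeriv_succ']
    push_cast; rfl

variable [CompleteSpace 𝕜] {y : 𝕜}

theorem iteratedDeriv_recurrence_of_eq_mul_deriv (hf : AnalyticAt 𝕜 f 0)
    (hode : f =ᶠ[𝓝 0] fun z => (1 - z) * (1 - y * z) * deriv f z) (n : ℕ) :
    iteratedDeriv (n + 1) f 0 = iteratedDeriv (n + 2) f 0
      - (1 + y) * ((n + 1) * iteratedDeriv (n + 1) f 0)
      + y * ((n + 1) * (n * iteratedDeriv n f 0)) := by
  have hf' : ContDiffAt 𝕜 (n + 1) (deriv f) 0 := hf.deriv.contDiffAt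
  -- `z * deriv f z` is the Euler operator `θ f`, whose Taylor coefficients at `0` are explicit.
  have hode' : f =ᶠ[𝓝 0] fun z => deriv f z - (1 + y) * (z * deriv f z)
      + y * (z * (z * deriv f z)) := by
    filter_upwards [hode] with z hz
    rw [hz]; ring
  calc iteratedDeriv (n + 1) f 0
      = iteratedDeriv (n + 1) (fun z => deriv f z - (1 + y) * (z * deriv f z)
          + y * (z * (z * deriv f z))) 0 := hode'.iteratedDeriv_eq _
    _ = _ := by
      rw [iteratedDeriv_fun_add (by fun_prop) (by fun_prop),
        iteratedDeriv_fun_sub (by fun_prop) (by fun_prop), iteratedDeriv_const_mul_field,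
        iteratedDeriv_const_mul_field, iteratedDeriv_succ_id_mul_zero hf',
        iteratedDeriv_succ_id_mul_zero (by fun_prop),
        iteratedDeriv_id_mul_deriv_zero (hf'.of_le (by simp)), ← iteratedDeriv_succ',
        ← iteratedDeriv_succ']

variable [CharZero 𝕜]

theorem taylorCoeff_recurrence_of_eq_mul_deriv (hf : AnalyticAt 𝕜 f 0)
    (hode : f =ᶠ[𝓝 0] fun z => (1 - z) * (1 - y * z) * deriv f z) {c : ℕ → 𝕜}
    (hc : ∀ n, c n = iteratedDeriv n f 0 / n.factorial) (n : ℕ) :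
    (n : 𝕜) * y * c n + (n + 2) * c (n + 2) = (2 + n + y + n * y) * c (n + 1) := by
  have hcoeff : ∀ k, iteratedDeriv k f 0 = k.factorial * c k := fun k => by
    rw [hc, mul_div_cancel₀ _ (Nat.cast_ne_zero.mpr k.factorial_ne_zero)]
  have hrec := iteratedDeriv_recurrence_of_eq_mul_deriv hf hode n
  simp only [hcoeff, Nat.factorial_succ] at hrec
  push_cast at hrec
  have hne : ((n + 1) * n.factorial : 𝕜) ≠ 0 :=
    mul_ne_zero (Nat.cast_add_one_ne_zero n) (Nat.cast_ne_zero.mpr n.factorial_ne_zero)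
  apply mul_left_cancel₀ hne
  linear_combination -hrec

end IteratedDerivAtZero

theorem hasDerivAt_cpow_div {y z : ℂ} (hy : y ≠ 1) (hz : 1 - z ≠ 0)
    (hw : (1 - y * z) / (1 - z) ∈ slitPlane) :
    HasDerivAt (fun z => ((1 - y * z) / (1 - z)) ^ (1 / (1 - y)))
      (((1 - y * z) / (1 - z)) ^ (1 / (1 - y)) / ((1 - z) * (1 - y * z))) z := by
  have hy' : 1 - y ≠ 0 := sub_ne_zero.mpr hy.symm
  have hyz : 1 - y * z ≠ 0 := by
    intro h; simp [h] at hw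
  have hdiv : HasDerivAt (fun z => (1 - y * z) / (1 - z)) ((1 - y) / (1 - z) ^ 2) z := by
    refine ((((hasDerivAt_id' z).const_mul y).const_sub 1).fun_div
      ((hasDerivAt_id' z).const_sub 1) hz).congr_deriv ?_
    ring
  refine (hdiv.cpow_const hw).congr_deriv ?_
  rw [cpow_sub _ _ (slitPlane_ne_zero hw), cpow_one]
  field_simp

theorem stmt_8 (y : ℂ) (hy : ‖y‖ < 1) (c : ℕ → ℂ)
    (hc : ∀ n, c n =
      iteratedDeriv n (fun z : ℂ => ((1 - y * z) / (1 - z)) ^ (1 / (1 - y))) 0 / n.factorial) :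
    c 0 = 1 ∧ c 1 = 1 ∧ ∀ n : ℕ,
      (n : ℂ) * y * c n + ((n : ℂ) + 2) * c (n + 2) =
        (2 + (n : ℂ) + y + (n : ℂ) * y) * c (n + 1) := by
  have hy1 : y ≠ 1 := by
    rintro rfl
    simp at hy
  set g : ℂ → ℂ := fun z => ((1 - y * z) / (1 - z)) ^ (1 / (1 - y))
  have hbase : ∀ᶠ z in 𝓝 0, 1 - z ≠ 0 ∧ (1 - y * z) / (1 - z) ∈ slitPlane := by
    have hden : ContinuousAt (fun z : ℂ => 1 - z) 0 := by fun_prop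
    have hquot : ContinuousAt (fun z : ℂ => (1 - y * z) / (1 - z)) 0 :=
      (by fun_prop : ContinuousAt (fun z : ℂ => 1 - y * z) 0).div hden (by simp)
    exact (hden.eventually_ne (by simp)).and
      (hquot.eventually_mem (isOpen_slitPlane.mem_nhds (by simp)))
  have hderiv : ∀ᶠ z in 𝓝 0, HasDerivAt g (g z / ((1 - z) * (1 - y * z))) z :=
    hbase.mono fun z hz => hasDerivAt_cpow_div hy1 hz.1 hz.2
  have hode : g =ᶠ[𝓝 0] fun z => (1 - z) * (1 - y * z) * deriv g z := by
    filter_upwards [hbase, hderiv] with z hz hgz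
    rw [hgz.deriv, mul_div_cancel₀ _ (mul_ne_zero hz.1 ?_)]
    intro h; simp [h] at hz
  have hg : AnalyticAt ℂ g 0 := by
    refine AnalyticAt.cpow ?_ analyticAt_const hbase.self_of_nhds.2
    fun_prop (disch := simp)
  refine ⟨by simp [hc, g], ?_, taylorCoeff_recurrence_of_eq_mul_deriv hg hode hc⟩
  rw [hc, iteratedDeriv_one, hderiv.self_of_nhds.deriv]
  simp [g]
end

section
/- Let a, b, c ∈ ℂ with a + b + c = 1, and let x, y, z ∈ ℂ with |x| < 1, |y| < 1, |z| < 1. Then the infinite product over all triples of positive integers (l,m,n) with l ≤ n, m ≤ n and gcd(l,m,n) = 1 of (1/(1 − x^l y^m z^n))^(1/(l^a m^b n^c)) equals exp( Σ_{n=1}^∞ (Σ_{l=1}^n x^l / l^a) · (Σ_{m=1}^n y^m / m^b) · z^n / n^c ). -/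
/-!
Every point of the pyramid `0 < l, m ≤ n` is uniquely `k • p` with `k` the gcd of its coordinates
and `p` visible. Because `a + b + c = 1`, the powers of `k` in the denominator of the summand
`x^l y^m z^n / (l^a m^b n^c)` at `k • p` collapse to `k`, so the sum along the ray through `p` is
the logarithmic series `∑ₖ w^k / k = log (1 / (1 - w))` with `w = x^l y^m z^n`, scaled by
`1 / (l^a m^b n^c)`. Layer `n` has `n²` points, each term bounded by a power of `n` times
`‖z‖^n`, so the triple sum converges absolutely; regrouping it by rays and by layers and
exponentiating gives the identity.
-/

open Complex Finset

abbrev PyramidPoint : Type :=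
  {q : ℕ × ℕ × ℕ // 0 < q.1 ∧ 0 < q.2.1 ∧ 0 < q.2.2 ∧ q.1 ≤ q.2.2 ∧ q.2.1 ≤ q.2.2}

abbrev VisiblePyramidPoint : Type :=
  {p : ℕ × ℕ × ℕ // 0 < p.1 ∧ 0 < p.2.1 ∧ 0 < p.2.2 ∧
    p.1 ≤ p.2.2 ∧ p.2.1 ≤ p.2.2 ∧ Nat.gcd p.1 (Nat.gcd p.2.1 p.2.2) = 1}

namespace PyramidPoint

def equivSigma : PyramidPoint ≃ Σ n : ℕ+, Icc 1 (n : ℕ) × Icc 1 (n : ℕ) where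
  toFun q := ⟨⟨q.1.2.2, q.2.2.2.1⟩,
    ⟨q.1.1, mem_Icc.mpr ⟨q.2.1, q.2.2.2.2.1⟩⟩, ⟨q.1.2.1, mem_Icc.mpr ⟨q.2.2.1, q.2.2.2.2.2⟩⟩⟩
  invFun s := ⟨(s.2.1, s.2.2, s.1), (mem_Icc.mp s.2.1.2).1, (mem_Icc.mp s.2.2.2).1, s.1.2,
    (mem_Icc.mp s.2.1.2).2, (mem_Icc.mp s.2.2.2).2⟩
  left_inv _ := rfl
  right_inv _ := rfl

variable {E : Type*} [NormedAddCommGroup E] {f : ℕ × ℕ × ℕ → E}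

theorem summable_of_norm_le [CompleteSpace E] {u : ℕ → ℝ}
    (hf : ∀ l m n, 0 < l → 0 < m → l ≤ n → m ≤ n → ‖f (l, m, n)‖ ≤ u n)
    (hu : Summable fun n : ℕ+ => ((n : ℕ) : ℝ) ^ 2 * u n) :
    Summable fun q : PyramidPoint => f q.1 := by
  refine equivSigma.symm.summable_iff.mp (Summable.of_norm ?_)
  refine (summable_sigma_of_nonneg fun _ => norm_nonneg _).mpr
    ⟨fun _ => .of_finite, hu.of_nonneg_of_le (fun _ => tsum_nonneg fun _ => norm_nonneg _) ?_⟩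
  intro n
  rw [tsum_fintype]
  calc _ ≤ (univ : Finset (Icc 1 (n : ℕ) × Icc 1 (n : ℕ))).card • u n :=
        sum_le_card_nsmul _ _ _ fun p _ =>
          hf _ _ _ (mem_Icc.mp p.1.2).1 (mem_Icc.mp p.2.2).1 (mem_Icc.mp p.1.2).2
            (mem_Icc.mp p.2.2).2
    _ = ((n : ℕ) : ℝ) ^ 2 * u n := by simp [sq]

theorem tsum_eq (hf : Summable fun q : PyramidPoint => f q.1) :
    ∑' q : PyramidPoint, f q.1 =
      ∑' n : ℕ+, ∑ l ∈ Icc 1 (n : ℕ), ∑ m ∈ Icc 1 (n : ℕ), f (l, m, n) := by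
  rw [← equivSigma.symm.tsum_eq]
  have hsig : Summable fun s => f (equivSigma.symm s).1 := equivSigma.symm.summable_iff.mpr hf
  rw [hsig.tsum_sigma' fun _ => .of_finite]
  refine tsum_congr fun n => ?_
  rw [tsum_fintype, Fintype.sum_prod_type, ← sum_coe_sort (Icc 1 (n : ℕ))]
  exact sum_congr rfl fun l _ => sum_coe_sort (Icc 1 (n : ℕ)) fun m => f (l, m, n)

end PyramidPoint

namespace VisiblePyramidPoint

def scaleEquiv : VisiblePyramidPoint × ℕ+ ≃ PyramidPoint where
  toFun pk := ⟨(pk.2 * pk.1.1.1, pk.2 * pk.1.1.2.1, pk.2 * pk.1.1.2.2),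
    Nat.mul_pos pk.2.pos pk.1.2.1, Nat.mul_pos pk.2.pos pk.1.2.2.1,
    Nat.mul_pos pk.2.pos pk.1.2.2.2.1,
    Nat.mul_le_mul_left _ pk.1.2.2.2.2.1, Nat.mul_le_mul_left _ pk.1.2.2.2.2.2.1⟩
  invFun q :=
    let d := Nat.gcd q.1.1 (Nat.gcd q.1.2.1 q.1.2.2)
    have hd : 0 < d := Nat.gcd_pos_of_pos_left _ q.2.1
    have hdl : d ∣ q.1.1 := Nat.gcd_dvd_left _ _
    have hdmn : d ∣ Nat.gcd q.1.2.1 q.1.2.2 := Nat.gcd_dvd_right _ _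
    have hdm : d ∣ q.1.2.1 := hdmn.trans (Nat.gcd_dvd_left _ _)
    have hdn : d ∣ q.1.2.2 := hdmn.trans (Nat.gcd_dvd_right _ _)
    (⟨(q.1.1 / d, q.1.2.1 / d, q.1.2.2 / d),
      Nat.div_pos (Nat.le_of_dvd q.2.1 hdl) hd, Nat.div_pos (Nat.le_of_dvd q.2.2.1 hdm) hd,
      Nat.div_pos (Nat.le_of_dvd q.2.2.2.1 hdn) hd,
      Nat.div_le_div_right q.2.2.2.2.1, Nat.div_le_div_right q.2.2.2.2.2, by
        rw [Nat.gcd_div hdm hdn, Nat.gcd_div hdl hdmn, Nat.div_self hd]⟩, ⟨d, hd⟩)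
  left_inv := by
    rintro ⟨⟨⟨l, m, n⟩, -, -, -, -, -, hp⟩, k⟩
    have hk : Nat.gcd (k * l) (Nat.gcd (k * m) (k * n)) = k := by
      rw [Nat.gcd_mul_left, Nat.gcd_mul_left, hp, mul_one]
    simp only [hk, Nat.mul_div_cancel_left _ k.pos]
    rfl
  right_inv := by
    rintro ⟨⟨l, m, n⟩, -⟩
    have hdmn : Nat.gcd l (Nat.gcd m n) ∣ Nat.gcd m n := Nat.gcd_dvd_right _ _
    simp only [PNat.mk_coe, Nat.mul_div_cancel' (Nat.gcd_dvd_left _ _),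
      Nat.mul_div_cancel' (hdmn.trans (Nat.gcd_dvd_left _ _)),
      Nat.mul_div_cancel' (hdmn.trans (Nat.gcd_dvd_right _ _))]

end VisiblePyramidPoint

theorem Complex.one_sub_mem_slitPlane_s9 {w : ℂ} (hw : ‖w‖ < 1) : 1 - w ∈ slitPlane :=
  sub_eq_add_neg 1 w ▸ mem_slitPlane_of_norm_lt_one (by rwa [norm_neg])

theorem Complex.hasSum_pnat_pow_div {w : ℂ} (hw : ‖w‖ < 1) :
    HasSum (fun k : ℕ+ => w ^ (k : ℕ) / k) (log (1 / (1 - w))) := by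
  rw [one_div, log_inv _ (slitPlane_arg_ne_pi (one_sub_mem_slitPlane_s9 hw))]
  exact (hasSum_pnat_iff (f := fun k : ℕ => w ^ k / k)).mpr
    (by simpa using hasSum_taylorSeries_neg_log hw)

theorem Complex.norm_div_natCast_cpow_le (w s : ℂ) {L N : ℕ} (hL : 0 < L) (hLN : L ≤ N) :
    ‖w / (L : ℂ) ^ s‖ ≤ ‖w‖ * (N : ℝ) ^ ⌈-s.re⌉₊ := by
  have hL1 : (1 : ℝ) ≤ L := by exact_mod_cast hL
  rw [norm_div, norm_natCast_cpow_of_pos hL, div_eq_mul_inv, ← Real.rpow_neg (by positivity)]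
  gcongr
  calc (L : ℝ) ^ (-s.re) ≤ (L : ℝ) ^ (⌈-s.re⌉₊ : ℝ) :=
        Real.rpow_le_rpow_of_exponent_le hL1 (Nat.le_ceil _)
    _ = (L : ℝ) ^ ⌈-s.re⌉₊ := Real.rpow_natCast _ _
    _ ≤ (N : ℝ) ^ ⌈-s.re⌉₊ := by gcongr

theorem norm_pow_mul_pow_mul_pow_lt_one {𝕜 : Type*} [NormedDivisionRing 𝕜] {x y z : 𝕜}
    (hx : ‖x‖ ≤ 1) (hy : ‖y‖ ≤ 1) (hz : ‖z‖ < 1) {l m n : ℕ} (hn : 0 < n) :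
    ‖x ^ l * y ^ m * z ^ n‖ < 1 := by
  rw [norm_mul, norm_mul, norm_pow, norm_pow, norm_pow]
  calc ‖x‖ ^ l * ‖y‖ ^ m * ‖z‖ ^ n ≤ 1 * 1 * ‖z‖ ^ n := by
        gcongr
        · exact pow_le_one₀ (norm_nonneg _) hx
        · exact pow_le_one₀ (norm_nonneg _) hy
    _ < 1 := by simpa using pow_lt_one₀ (norm_nonneg _) hz hn.ne'

noncomputable def vpvSummand (a b c x y z : ℂ) (q : ℕ × ℕ × ℕ) : ℂ :=
  x ^ q.1 / (q.1 : ℂ) ^ a * (y ^ q.2.1 / (q.2.1 : ℂ) ^ b) * (z ^ q.2.2 / (q.2.2 : ℂ) ^ c)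

section vpvSummand

variable {a b c x y z : ℂ}

theorem summable_vpvSummand (hx : ‖x‖ ≤ 1) (hy : ‖y‖ ≤ 1) (hz : ‖z‖ < 1) :
    Summable fun q : PyramidPoint => vpvSummand a b c x y z q.1 := by
  set e := ⌈-a.re⌉₊ + ⌈-b.re⌉₊ + ⌈-c.re⌉₊
  refine PyramidPoint.summable_of_norm_le (u := fun n => (n : ℝ) ^ e * ‖z‖ ^ n) ?_ ?_
  · intro l m n hl hm hln hmn
    calc ‖vpvSummand a b c x y z (l, m, n)‖
        = ‖x ^ l / (l : ℂ) ^ a‖ * ‖y ^ m / (m : ℂ) ^ b‖ * ‖z ^ n / (n : ℂ) ^ c‖ := by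
          simp only [vpvSummand, norm_mul]
      _ ≤ (‖x ^ l‖ * (n : ℝ) ^ ⌈-a.re⌉₊) * (‖y ^ m‖ * (n : ℝ) ^ ⌈-b.re⌉₊) *
          (‖z ^ n‖ * (n : ℝ) ^ ⌈-c.re⌉₊) := by
          gcongr
          · exact norm_div_natCast_cpow_le _ _ hl hln
          · exact norm_div_natCast_cpow_le _ _ hm hmn
          · exact norm_div_natCast_cpow_le _ _ (hl.trans_le hln) le_rfl
      _ ≤ (1 * (n : ℝ) ^ ⌈-a.re⌉₊) * (1 * (n : ℝ) ^ ⌈-b.re⌉₊) *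
          (‖z‖ ^ n * (n : ℝ) ^ ⌈-c.re⌉₊) := by
          rw [norm_pow, norm_pow, norm_pow]
          gcongr
          · exact pow_le_one₀ (norm_nonneg _) hx
          · exact pow_le_one₀ (norm_nonneg _) hy
      _ = (n : ℝ) ^ e * ‖z‖ ^ n := by ring
  · refine ((summable_pow_mul_geometric_of_norm_lt_one (e + 2) (r := ‖z‖)
      (by rwa [norm_norm])).comp_injective PNat.coe_injective).congr fun n => ?_
    simp only [Function.comp_apply]
    ring

theorem vpvSummand_mul (habc : a + b + c = 1) {k : ℕ} (hk : 0 < k) (l m n : ℕ) :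
    vpvSummand a b c x y z (k * l, k * m, k * n) =
      (x ^ l * y ^ m * z ^ n) ^ k / k * (1 / ((l : ℂ) ^ a * (m : ℂ) ^ b * (n : ℂ) ^ c)) := by
  have hk' : (k : ℂ) ^ a * (k : ℂ) ^ b * (k : ℂ) ^ c = k := by
    rw [← cpow_add _ _ (by exact_mod_cast hk.ne'), ← cpow_add _ _ (by exact_mod_cast hk.ne'),
      habc, cpow_one]
  simp only [vpvSummand, Nat.cast_mul, natCast_mul_natCast_cpow, div_mul_div_comm]
  rw [show (k : ℂ) ^ a * (l : ℂ) ^ a * ((k : ℂ) ^ b * (m : ℂ) ^ b) * ((k : ℂ) ^ c * (n : ℂ) ^ c)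
      = k * ((l : ℂ) ^ a * (m : ℂ) ^ b * (n : ℂ) ^ c) by
    linear_combination ((l : ℂ) ^ a * (m : ℂ) ^ b * (n : ℂ) ^ c) * hk']
  ring

theorem hasSum_vpvSummand_mul_pnat (habc : a + b + c = 1) {l m n : ℕ}
    (hw : ‖x ^ l * y ^ m * z ^ n‖ < 1) :
    HasSum (fun k : ℕ+ => vpvSummand a b c x y z (k * l, k * m, k * n))
      (log (1 / (1 - x ^ l * y ^ m * z ^ n)) *
        (1 / ((l : ℂ) ^ a * (m : ℂ) ^ b * (n : ℂ) ^ c))) := by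
  simp_rw [vpvSummand_mul habc (PNat.pos _)]
  exact (hasSum_pnat_pow_div hw).mul_right _

end vpvSummand

/-- The 3D first-hyperquadrant pyramid Visible Point Vector identity. -/
theorem stmt_9 (a b c : ℂ) (habc : a + b + c = 1) (x y z : ℂ)
    (hx : ‖x‖ < 1) (hy : ‖y‖ < 1) (hz : ‖z‖ < 1) :
    (∏' p : {p : ℕ × ℕ × ℕ // 0 < p.1 ∧ 0 < p.2.1 ∧ 0 < p.2.2 ∧
        p.1 ≤ p.2.2 ∧ p.2.1 ≤ p.2.2 ∧ Nat.gcd p.1 (Nat.gcd p.2.1 p.2.2) = 1},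
      (1 / (1 - x ^ p.1.1 * y ^ p.1.2.1 * z ^ p.1.2.2)) ^
        (1 / ((p.1.1 : ℂ) ^ a * (p.1.2.1 : ℂ) ^ b * (p.1.2.2 : ℂ) ^ c))) =
    Complex.exp (∑' n : ℕ+,
      (∑ l ∈ Finset.Icc 1 (n : ℕ), x ^ l / (l : ℂ) ^ a) *
      (∑ m ∈ Finset.Icc 1 (n : ℕ), y ^ m / (m : ℂ) ^ b) *
      z ^ (n : ℕ) / ((n : ℕ) : ℂ) ^ c) := by
  have hw (p : VisiblePyramidPoint) : ‖x ^ p.1.1 * y ^ p.1.2.1 * z ^ p.1.2.2‖ < 1 :=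
    norm_pow_mul_pow_mul_pow_lt_one hx.le hy.le hz p.2.2.2.1
  have hsum : Summable fun q : PyramidPoint => vpvSummand a b c x y z q.1 :=
    summable_vpvSummand hx.le hy.le hz
  have hlog := (VisiblePyramidPoint.scaleEquiv.hasSum_iff.mpr hsum.hasSum).prod_fiberwise
    -- elaborated without expected type: unifying against it would unfold `scaleEquiv` and time out
    fun p => (hasSum_vpvSummand_mul_pnat habc (hw p) :)
  rw [tprod_congr fun p => cpow_def_of_ne_zero
    (one_div_ne_zero (slitPlane_ne_zero (one_sub_mem_slitPlane_s9 (hw p)))) _]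
  refine hlog.cexp.tprod_eq.trans (congrArg cexp ?_)
  rw [PyramidPoint.tsum_eq hsum]
  refine tsum_congr fun n => ?_
  rw [mul_div_assoc, sum_mul_sum, sum_mul]
  simp only [vpvSummand, sum_mul]
end

section
/- Let n ≥ 1 be an integer and let s_1, …, s_n ∈ ℂ with Re(s_i) > 1 for every i. Then the sum over all n-tuples of positive integers (a_1, …, a_n) with gcd(a_1, …, a_n) = 1 of 1/(a_1^{s_1} a_2^{s_2} ⋯ a_n^{s_n}) equals ζ(s_1) ζ(s_2) ⋯ ζ(s_n) / ζ(s_1 + s_2 + ⋯ + s_n), where ζ is the Riemann zeta function. -/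
/-!
Every tuple of positive integers is uniquely `d • b` with `d` its gcd and `b` coprime, and the
summand is multiplicative in this decomposition: `(d b)^(-s) = d^(-∑ sᵢ) b^(-s)`. Summing over all
positive tuples, which by absolute convergence factors into `∏ ζ(sᵢ)`, therefore gives
`ζ(∑ sᵢ)` times the sum over coprime tuples; `ζ(∑ sᵢ) ≠ 0` since `Re (∑ sᵢ) > 1`.
-/

open Complex Filter Finset Topology

section PiProduct

variable {ι β R : Type*} [Fintype ι]

theorem Fintype.tendsto_piFinset_const_atTop [DecidableEq ι] :
    Tendsto (fun t : Finset β => Fintype.piFinset fun _ : ι => t) atTop atTop := by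
  classical
  refine tendsto_atTop_atTop.2 fun u => ⟨univ.biUnion fun i => u.image (· i), fun t ht a ha => ?_⟩
  exact Fintype.mem_piFinset.2 fun i => ht (mem_biUnion.2 ⟨i, mem_univ i, mem_image_of_mem _ ha⟩)

variable [NormedCommRing R] [NormOneClass R] {f : ι → β → R}

theorem summable_norm_pi_prod (hf : ∀ i, Summable fun b => ‖f i b‖) :
    Summable fun a : ι → β => ‖∏ i, f i (a i)‖ := by
  classical
  refine .of_nonneg_of_le (fun _ => norm_nonneg _) (fun a => norm_prod_le _ _) <|
    summable_of_sum_le (c := ∏ i, ∑' b, ‖f i b‖) (fun a => prod_nonneg fun i _ => norm_nonneg _)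
      fun u => ?_
  calc ∑ a ∈ u, ∏ i, ‖f i (a i)‖
      ≤ ∑ a ∈ Fintype.piFinset fun i => u.image (· i), ∏ i, ‖f i (a i)‖ :=
        sum_le_sum_of_subset_of_nonneg
          (fun a ha => Fintype.mem_piFinset.2 fun i => mem_image_of_mem _ ha)
          fun a _ _ => prod_nonneg fun i _ => norm_nonneg _
    _ = ∏ i, ∑ b ∈ u.image (· i), ‖f i b‖ := by rw [prod_univ_sum]
    _ ≤ ∏ i, ∑' b, ‖f i b‖ :=
        Finset.prod_le_prod (fun i _ => sum_nonneg fun b _ => norm_nonneg _)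
          fun i _ => (hf i).sum_le_tsum _ fun b _ => norm_nonneg _

theorem hasSum_pi_prod [CompleteSpace R] (hf : ∀ i, Summable fun b => ‖f i b‖) :
    HasSum (fun a : ι → β => ∏ i, f i (a i)) (∏ i, ∑' b, f i b) := by
  classical
  have hsum := (summable_norm_pi_prod hf).of_norm
  have hcubes := hsum.hasSum.comp Fintype.tendsto_piFinset_const_atTop
  have hprod : Tendsto (fun t : Finset β => ∏ i, ∑ b ∈ t, f i b) atTop (𝓝 (∏ i, ∑' b, f i b)) :=
    tendsto_finsetProd _ fun i _ => (hf i).of_norm.hasSum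
  -- the partial sums over the cubes `tᶥ` are products of partial sums
  simp only [Function.comp_def, ← prod_univ_sum] at hcubes
  rw [← tendsto_nhds_unique hcubes hprod]
  exact hsum.hasSum

end PiProduct

theorem Complex.cpow_finsetSum {ι : Type*} {x : ℂ} (hx : x ≠ 0) (s : Finset ι) (f : ι → ℂ) :
    x ^ (∑ i ∈ s, f i) = ∏ i ∈ s, x ^ f i := by
  simp [cpow_def_of_ne_zero hx, mul_sum, exp_sum]

theorem riemannZeta_eq_tsum_pnat {s : ℂ} (hs : 1 < s.re) :
    riemannZeta s = ∑' n : ℕ+, 1 / (n : ℂ) ^ s := by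
  rw [zeta_eq_tsum_one_div_nat_add_one_cpow hs,
    tsum_pnat_eq_tsum_succ (f := fun n : ℕ => 1 / (n : ℂ) ^ s)]
  simp

theorem summable_norm_one_div_pnat_cpow {s : ℂ} (hs : 1 < s.re) :
    Summable fun n : ℕ+ => ‖1 / (n : ℂ) ^ s‖ :=
  (summable_norm_iff.2 (summable_one_div_nat_cpow.2 hs)).comp_injective PNat.coe_injective

section GcdDecomposition

variable {ι : Type*} [Fintype ι] [Nonempty ι]

theorem Finset.univ_gcd_pos {a : ι → ℕ} (ha : ∀ i, 0 < a i) : 0 < univ.gcd a := by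
  inhabit ι
  exact Nat.pos_of_ne_zero fun h => (ha default).ne' (gcd_eq_zero_iff.1 h default (mem_univ _))

def gcdDecomposition :
    ℕ+ × {a : ι → ℕ // (∀ i, 0 < a i) ∧ univ.gcd a = 1} ≃ {a : ι → ℕ // ∀ i, 0 < a i} where
  toFun p := ⟨fun i => p.1 * p.2.1 i, fun i => Nat.mul_pos p.1.pos (p.2.2.1 i)⟩
  invFun a :=
    (⟨univ.gcd a.1, univ_gcd_pos a.2⟩,
      ⟨fun i => a.1 i / univ.gcd a.1,
        fun i => Nat.div_pos (Nat.le_of_dvd (a.2 i) (gcd_dvd (mem_univ i))) (univ_gcd_pos a.2),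
        gcd_div_eq_one (mem_univ (Classical.arbitrary ι)) (a.2 _).ne'⟩)
  left_inv := by
    rintro ⟨d, b, hb, hb1⟩
    have hgcd : (univ.gcd fun i => (d : ℕ) * b i) = d := by rw [Finset.gcd_mul_left, hb1]; simp
    refine Prod.ext (PNat.eq hgcd) (Subtype.ext (funext fun i => ?_))
    simp [hgcd]
  right_inv a := Subtype.ext <| funext fun i => Nat.mul_div_cancel' (gcd_dvd (mem_univ i))

end GcdDecomposition

section Zeta

variable {ι : Type*} [Fintype ι]

theorem one_div_prod_natCast_mul_cpow {d : ℕ} (hd : d ≠ 0) (b : ι → ℕ) (s : ι → ℂ) :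
    1 / ∏ i, ((d * b i : ℕ) : ℂ) ^ s i =
      1 / (d : ℂ) ^ (∑ i, s i) * (1 / ∏ i, (b i : ℂ) ^ s i) := by
  simp [natCast_mul_natCast_cpow, prod_mul_distrib, cpow_finsetSum (Nat.cast_ne_zero.2 hd),
    mul_comm]

def posTuplesEquivPNat : {a : ι → ℕ // ∀ i, 0 < a i} ≃ (ι → ℕ+) := Equiv.subtypePiEquivPi

theorem one_div_prod_cpow_posTuplesEquivPNat_symm (s : ι → ℂ) (b : ι → ℕ+) :
    1 / ∏ i, ((posTuplesEquivPNat.symm b).1 i : ℂ) ^ s i = ∏ i, 1 / (b i : ℂ) ^ s i := by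
  simp only [one_div, prod_inv_distrib]
  rfl

theorem hasSum_one_div_prod_cpow (s : ι → ℂ) (hs : ∀ i, 1 < (s i).re) :
    HasSum (fun a : {a : ι → ℕ // ∀ i, 0 < a i} => 1 / ∏ i, (a.1 i : ℂ) ^ s i)
      (∏ i, riemannZeta (s i)) := by
  rw [← posTuplesEquivPNat.symm.hasSum_iff,
    prod_congr rfl fun i _ => riemannZeta_eq_tsum_pnat (hs i)]
  simpa only [Function.comp_def, one_div_prod_cpow_posTuplesEquivPNat_symm] using
    hasSum_pi_prod fun i => summable_norm_one_div_pnat_cpow (hs i)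

theorem summable_norm_one_div_prod_cpow (s : ι → ℂ) (hs : ∀ i, 1 < (s i).re) :
    Summable fun a : {a : ι → ℕ // ∀ i, 0 < a i} => ‖1 / ∏ i, (a.1 i : ℂ) ^ s i‖ := by
  rw [← posTuplesEquivPNat.symm.summable_iff]
  simpa only [Function.comp_def, one_div_prod_cpow_posTuplesEquivPNat_symm] using
    summable_norm_pi_prod fun i => summable_norm_one_div_pnat_cpow (hs i)

end Zeta

theorem one_lt_re_sum {ι : Type*} [Fintype ι] [Nonempty ι] {s : ι → ℂ}
    (hs : ∀ i, 1 < (s i).re) : 1 < (∑ i, s i).re := by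
  inhabit ι
  rw [re_sum]
  calc 1 < (s default).re := hs default
    _ ≤ ∑ i, (s i).re :=
      single_le_sum (fun i _ => zero_le_one.trans (hs i).le) (mem_univ _)

theorem tsum_coprime_one_div_prod_cpow {ι : Type*} [Fintype ι] [Nonempty ι] (s : ι → ℂ)
    (hs : ∀ i, 1 < (s i).re) :
    (∑' a : {a : ι → ℕ // (∀ i, 0 < a i) ∧ univ.gcd a = 1}, 1 / ∏ i, (a.1 i : ℂ) ^ s i) =
      (∏ i, riemannZeta (s i)) / riemannZeta (∑ i, s i) := by
  have hσ := one_lt_re_sum hs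
  have hcoprime : Summable fun a : {a : ι → ℕ // (∀ i, 0 < a i) ∧ univ.gcd a = 1} =>
      ‖1 / ∏ i, (a.1 i : ℂ) ^ s i‖ :=
    ((summable_norm_one_div_prod_cpow s hs).comp_injective
      (i := fun a : {a : ι → ℕ // (∀ i, 0 < a i) ∧ univ.gcd a = 1} =>
        (⟨a.1, a.2.1⟩ : {a : ι → ℕ // ∀ i, 0 < a i}))
      fun _ _ h => Subtype.ext (congrArg Subtype.val h :) :)
  rw [eq_div_iff (riemannZeta_ne_zero_of_one_lt_re hσ), mul_comm, riemannZeta_eq_tsum_pnat hσ,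
    tsum_mul_tsum_of_summable_norm (summable_norm_one_div_pnat_cpow hσ) hcoprime]
  calc ∑' p : ℕ+ × {a : ι → ℕ // (∀ i, 0 < a i) ∧ univ.gcd a = 1},
        1 / (p.1 : ℂ) ^ (∑ i, s i) * (1 / ∏ i, (p.2.1 i : ℂ) ^ s i)
      = ∑' p, 1 / ∏ i, ((gcdDecomposition p).1 i : ℂ) ^ s i :=
        tsum_congr fun p => (one_div_prod_natCast_mul_cpow p.1.ne_zero _ _).symm
    _ = ∑' a : {a : ι → ℕ // ∀ i, 0 < a i}, 1 / ∏ i, (a.1 i : ℂ) ^ s i :=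
        gcdDecomposition.tsum_eq fun a => 1 / ∏ i, (a.1 i : ℂ) ^ s i
    _ = ∏ i, riemannZeta (s i) := (hasSum_one_div_prod_cpow s hs).tsum_eq

theorem stmt_19 (n : ℕ) (hn : 1 ≤ n) (s : Fin n → ℂ) (hs : ∀ i, 1 < (s i).re) :
    (∑' a : {a : Fin n → ℕ // (∀ i, 0 < a i) ∧ Finset.univ.gcd a = 1},
      1 / ∏ i, ((a.val i : ℂ) ^ s i)) =
    (∏ i, riemannZeta (s i)) / riemannZeta (∑ i, s i) :=
  haveI : Nonempty (Fin n) := ⟨⟨0, hn⟩⟩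
  tsum_coprime_one_div_prod_cpow s hs
end
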